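/- arXiv:2007.14123 — 6 statements merged into one kernel-verified Lean document; each statement's English description precedes it below -/
import Mathlib

section
/- Let R be a finite commutative chain ring whose residue field has q elements, and let n be a positive integer with gcd(n,q)=1. Then the determinant map from the ring of n×n circulant matrices over R to R is surjective; i.e., for every c in R there exists a circulant matrix A over R with det(A) = c. -/
/-!
The circulant matrix `I + b J`, where `J` is the all-ones matrix, has determinant `1 + n b`
(a rank-one perturbation of the identity). The cardinality `q` of the residue field vanishes in
it, so a Bézout relation for `gcd(n, q) = 1` makes `n` a unit there, hence in the local ring `R`,
and `b = (c - 1) / n` gives determinant `c`.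
-/

lemma Nat.cast_natCard_eq_zero (R : Type*) [AddGroupWithOne R] : (Nat.card R : R) = 0 := by
  cases finite_or_infinite R
  · have := Fintype.ofFinite R
    rw [Nat.card_eq_fintype_card, Nat.cast_card_eq_zero]
  · rw [Nat.card_eq_zero_of_infinite, Nat.cast_zero]

lemma isUnit_natCast_of_coprime_of_natCast_eq_zero {R : Type*} [CommRing R] {n m : ℕ}
    (hm : (m : R) = 0) (h : n.Coprime m) : IsUnit (n : R) := by
  have bezout := congrArg (Int.cast : ℤ → R) (Nat.gcd_eq_gcd_ab n m)
  rw [h.gcd_eq_one] at bezout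
  push_cast [hm] at bezout
  rw [zero_mul, add_zero] at bezout
  exact IsUnit.of_mul_eq_one _ bezout.symm

lemma IsLocalRing.isUnit_natCast_of_coprime_card_residueField {R : Type*} [CommRing R]
    [IsLocalRing R] {n : ℕ} (h : n.Coprime (Nat.card (ResidueField R))) : IsUnit (n : R) := by
  rw [← isUnit_map_iff (residue R), map_natCast]
  exact isUnit_natCast_of_coprime_of_natCast_eq_zero (Nat.cast_natCard_eq_zero _) h

namespace Matrix

lemma circulant_const {α : Type*} {n : ℕ} (b : α) :
    circulant (fun _ : ZMod n => b) = of fun _ _ => b := by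
  ext i j
  simp [circulant_apply]

variable {α ι : Type*} [CommRing α] [Fintype ι] [DecidableEq ι]

lemma det_one_add_of_const (b : α) : det (1 + of fun _ _ : ι => b) = 1 + Fintype.card ι * b := by
  have rank_one : (of fun _ _ : ι => b) =
      replicateCol Unit (fun _ => b) * replicateRow Unit (fun _ => (1 : α)) := by
    ext i j
    simp [mul_apply]
  rw [rank_one, det_one_add_replicateCol_mul_replicateRow]
  simp [dotProduct, nsmul_eq_mul]

lemma det_circulant_single_one_add_const {n : ℕ} [NeZero n] (b : α) :
    (circulant (Pi.single 0 1 + fun _ : ZMod n => b)).det = 1 + n * b := by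
  rw [circulant_add, circulant_single_one, circulant_const, det_one_add_of_const, ZMod.card]

end Matrix

theorem det_circulant_surjective_of_chainRing_general {R : Type*} [CommRing R] [IsLocalRing R]
    (q n : ℕ) (hq : Nat.card (R ⧸ IsLocalRing.maximalIdeal R) = q)
    [NeZero n] (hgcd : Nat.gcd n q = 1) :
    ∀ c : R, ∃ v : ZMod n → R, (Matrix.circulant v).det = c := by
  intro c
  obtain ⟨u, hu⟩ : IsUnit (n : R) :=
    IsLocalRing.isUnit_natCast_of_coprime_card_residueField (hq ▸ hgcd)
  refine ⟨Pi.single 0 1 + fun _ => ↑u⁻¹ * (c - 1), ?_⟩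
  rw [Matrix.det_circulant_single_one_add_const, ← hu, Units.mul_inv_cancel_left,
    add_sub_cancel]

/-- Over a commutative finite chain ring `R` with residue field of size `q`, if `gcd(n, q) = 1`
then the determinant map on `n × n` circulant matrices over `R` is surjective. -/
theorem det_circulant_surjective_of_chainRing {R : Type*} [CommRing R] [Finite R] [IsLocalRing R]
    (hchain : ∀ I J : Ideal R, I ≤ J ∨ J ≤ I)
    (q n : ℕ) (hq : Nat.card (R ⧸ IsLocalRing.maximalIdeal R) = q)
    [NeZero n] (hgcd : Nat.gcd n q = 1) :
    ∀ c : R, ∃ v : ZMod n → R, (Matrix.circulant v).det = c :=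
  det_circulant_surjective_of_chainRing_general q n hq hgcd
end

section
/- Let R = Z/p^e Z with p prime and e ≥ 1, and let n ≥ 1. The number of n-tuples (a_1,...,a_n) ∈ R^n with a_1·a_2⋯a_n = 0 equals p^(ne) - (p-1)^n · p^((e-1)n) · Σ_{i=0}^{e-1} C(n+i-1, n-1) · p^(-i). -/
/-!
Count the complement. A tuple over `ℤ/p^eℤ` has nonzero product exactly when every entry is
nonzero and the `p`-adic valuations `c i` of the entries' representatives in `[0, p^e)` add up
to some `s < e`. For `j < e` there are `(p-1)·p^(e-1-j)` residues of valuation `j`, so each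
valuation vector `c` with `∑ c = s` is realised by `(p-1)^n · p^((e-1)n - s)` tuples, and by
stars and bars there are `C(n+s-1, s)` such vectors.
-/

open Finset

theorem Finset.Nat.card_antidiagonalTuple (k n : ℕ) :
    #(Finset.Nat.antidiagonalTuple k n) = (k + n - 1).choose n := by
  have toSym : {c : Fin k → ℕ // ∑ i, c i = n} ≃ Sym (Fin k) n :=
    (Finsupp.equivFunOnFinite.symm.subtypeEquiv fun c => by simp [Finsupp.sum_fintype]).trans
      (Sym.equivNatSum _ n).symm
  rw [card_eq_of_equiv_fintype ((Equiv.subtypeEquivRight fun _ => mem_antidiagonalTuple).trans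
    toSym), Sym.card_sym_eq_choose, Fintype.card_fin]

theorem Finset.card_filter_piFinset_comp_mem {ι α β : Type*} [Fintype ι] [DecidableEq ι]
    [DecidableEq β] (s : ι → Finset α) (f : α → β) (t : Finset (ι → β)) :
    #{v ∈ Fintype.piFinset s | (fun i => f (v i)) ∈ t} =
      ∑ c ∈ t, ∏ i, #{a ∈ s i | f a = c i} := by
  refine (card_eq_sum_card_fiberwise (f := fun (v : ι → α) i => f (v i))
    fun v hv => (mem_filter.1 hv).2).trans (sum_congr rfl fun c hc => ?_)
  rw [← Fintype.card_piFinset]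
  congr 1
  ext v
  simp only [mem_filter, Fintype.mem_piFinset, funext_iff]
  constructor
  · rintro ⟨⟨hs, -⟩, hf⟩ i
    exact ⟨hs i, hf i⟩
  · intro h
    have hfv : (fun i => f (v i)) = c := funext fun i => (h i).2
    exact ⟨⟨fun i => (h i).1, hfv ▸ hc⟩, fun i => (h i).2⟩

theorem Nat.card_filter_dvd_range_mul (m : ℕ) {d : ℕ} (hd : d ≠ 0) :
    #{a ∈ range (m * d) | d ∣ a} = m := by
  have : {a ∈ range (m * d) | d ∣ a} = (range m).image (· * d) := by
    ext a
    simp only [mem_filter, mem_range, mem_image]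
    constructor
    · rintro ⟨ha, b, rfl⟩
      exact ⟨b, by nlinarith [Nat.pos_of_ne_zero hd], mul_comm b d⟩
    · rintro ⟨b, hb, rfl⟩
      exact ⟨Nat.mul_lt_mul_of_pos_right hb (Nat.pos_of_ne_zero hd), dvd_mul_left d b⟩
  rw [this, Finset.card_image_of_injective _ (mul_left_injective₀ hd), card_range]

namespace ZMod

theorem card_filter_val {N : ℕ} [NeZero N] (P : ℕ → Prop) [DecidablePred P] :
    #{x : ZMod N | P x.val} = #{a ∈ range N | P a} :=
  card_nbij' val (fun a => (a : ZMod N))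
    (fun x hx => by simpa using ⟨val_lt x, (mem_filter.1 hx).2⟩)
    (fun a ha => by
      obtain ⟨ha, hP⟩ := mem_filter.1 ha
      simpa [val_cast_of_lt (mem_range.1 ha)] using hP)
    (fun x _ => natCast_zmod_val x)
    (fun a ha => val_cast_of_lt (mem_range.1 (mem_filter.1 ha).1))

variable {p : ℕ} [Fact p.Prime] {e : ℕ}

theorem card_filter_pow_dvd_val {k : ℕ} (hk : k ≤ e) :
    #{x : ZMod (p ^ e) | p ^ k ∣ x.val} = p ^ (e - k) := by
  rw [card_filter_val, ← Nat.card_filter_dvd_range_mul (p ^ (e - k))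
    (pow_ne_zero k (Fact.out : p.Prime).ne_zero), ← pow_add, Nat.sub_add_cancel hk]

theorem card_filter_factorization_val_eq {j : ℕ} (hj : j < e) :
    #{x : ZMod (p ^ e) | x ≠ 0 ∧ x.val.factorization p = j} = (p - 1) * p ^ (e - 1 - j) := by
  have hp : p.Prime := Fact.out
  have hsplit : ({x : ZMod (p ^ e) | x ≠ 0 ∧ x.val.factorization p = j} : Finset _) =
      univ.filter (fun x : ZMod (p ^ e) => p ^ j ∣ x.val) \
        univ.filter (fun x : ZMod (p ^ e) => p ^ (j + 1) ∣ x.val) := by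
    ext x
    simp only [mem_filter, mem_sdiff, mem_univ, true_and]
    by_cases hx : x = 0
    · simp [hx]
    · rw [hp.pow_dvd_iff_le_factorization ((val_ne_zero x).2 hx),
        hp.pow_dvd_iff_le_factorization ((val_ne_zero x).2 hx)]
      simp only [ne_eq, hx, not_false_eq_true, true_and]
      omega
  have hsub : univ.filter (fun x : ZMod (p ^ e) => p ^ (j + 1) ∣ x.val) ⊆
      univ.filter (fun x : ZMod (p ^ e) => p ^ j ∣ x.val) :=
    monotone_filter_right univ fun x _ => (pow_dvd_pow p j.le_succ).trans
  rw [hsplit, card_sdiff_of_subset hsub, card_filter_pow_dvd_val hj.le, card_filter_pow_dvd_val hj,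
    show e - j = e - 1 - j + 1 by omega, show e - (j + 1) = e - 1 - j by omega, pow_succ,
    Nat.sub_one_mul, mul_comm]

theorem prod_ne_zero_iff_sum_factorization_val_lt {ι : Type*} [Fintype ι]
    (v : ι → ZMod (p ^ e)) :
    ∏ i, v i ≠ 0 ↔ (∀ i, v i ≠ 0) ∧ ∑ i, (v i).val.factorization p < e := by
  have hp : p.Prime := Fact.out
  by_cases h0 : ∀ i, v i ≠ 0
  · have hval : ∀ i ∈ univ, (v i).val ≠ 0 := fun i _ => (val_ne_zero _).2 (h0 i)
    have hcast : ∏ i, v i = ((∏ i, (v i).val : ℕ) : ZMod (p ^ e)) := by simp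
    rw [hcast, Ne, natCast_eq_zero_iff, hp.pow_dvd_iff_le_factorization (prod_ne_zero_iff.2 hval),
      Nat.factorization_prod_apply hval]
    simp [h0]
  · push Not at h0
    obtain ⟨i, hi⟩ := h0
    exact iff_of_false (by simp [prod_eq_zero (mem_univ i) hi]) fun h => h.1 i hi

theorem prod_card_filter_factorization_val_eq {ι : Type*} [Fintype ι] (c : ι → ℕ)
    (hc : ∑ i, c i < e) :
    ∏ i, #{x : ZMod (p ^ e) | x ≠ 0 ∧ x.val.factorization p = c i} =
      (p - 1) ^ Fintype.card ι * p ^ ((e - 1) * Fintype.card ι - ∑ i, c i) := by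
  have hle : ∀ i ∈ univ, c i ≤ e - 1 := fun i _ => by
    have := single_le_sum (fun j _ => Nat.zero_le (c j)) (mem_univ i)
    omega
  rw [prod_congr rfl fun i hi => card_filter_factorization_val_eq (by have := hle i hi; omega),
    prod_mul_distrib, prod_const, prod_pow_eq_pow_sum, sum_tsub_distrib _ hle, sum_const,
    card_univ, smul_eq_mul, mul_comm (Fintype.card ι), mul_comm]

theorem card_filter_prod_ne_zero (n : ℕ) :
    #{v : Fin n → ZMod (p ^ e) | ∏ i, v i ≠ 0} =
      (p - 1) ^ n * ∑ s ∈ range e, (n + s - 1).choose s * p ^ ((e - 1) * n - s) := by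
  set T := (range e).biUnion (Finset.Nat.antidiagonalTuple n)
  have hfilter : ({v : Fin n → ZMod (p ^ e) | ∏ i, v i ≠ 0} : Finset _) =
      {v ∈ Fintype.piFinset fun _ : Fin n => {x : ZMod (p ^ e) | x ≠ 0} |
        (fun i => (v i).val.factorization p) ∈ T} := by
    ext v
    simp [prod_ne_zero_iff_sum_factorization_val_lt, T, Finset.Nat.mem_antidiagonalTuple]
  have hdisj : (range e : Set ℕ).PairwiseDisjoint (Finset.Nat.antidiagonalTuple n) :=
    fun a _ b _ hab => disjoint_left.2 fun c hca hcb =>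
      hab ((Finset.Nat.mem_antidiagonalTuple.1 hca).symm.trans
        (Finset.Nat.mem_antidiagonalTuple.1 hcb))
  have hfiber : ∀ s ∈ range e, ∀ c ∈ Finset.Nat.antidiagonalTuple n s,
      ∏ i, #{x ∈ {x : ZMod (p ^ e) | x ≠ 0} | x.val.factorization p = c i} =
        (p - 1) ^ n * p ^ ((e - 1) * n - s) := fun s hs c hc => by
    rw [← Finset.Nat.mem_antidiagonalTuple.1 hc] at hs ⊢
    simpa only [filter_filter, Fintype.card_fin] using
      prod_card_filter_factorization_val_eq c (mem_range.1 hs)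
  rw [hfilter, card_filter_piFinset_comp_mem _ fun x : ZMod (p ^ e) => x.val.factorization p,
    sum_biUnion hdisj, mul_sum]
  refine sum_congr rfl fun s hs => ?_
  rw [sum_congr rfl (hfiber s hs), sum_const, Finset.Nat.card_antidiagonalTuple, smul_eq_mul]
  ring

end ZMod

theorem card_tuples_prod_zero_zmod_general (p e n : ℕ) (hp : p.Prime) (hn : 1 ≤ n) :
    Nat.card {v : Fin n → ZMod (p ^ e) // ∏ i, v i = 0} =
      p ^ (n * e) - (p - 1) ^ n *
        ∑ i ∈ Finset.range e, Nat.choose (n + i - 1) (n - 1) * p ^ ((e - 1) * n - i) := by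
  have := Fact.mk hp
  have hchoose : ∀ i, (n + i - 1).choose (n - 1) = (n + i - 1).choose i := fun i =>
    Nat.choose_symm_of_eq_add (by omega)
  have hsplit := card_filter_add_card_filter_not (s := univ)
    fun v : Fin n → ZMod (p ^ e) => ∏ i, v i = 0
  rw [card_univ, Fintype.card_fun, ZMod.card, Fintype.card_fin, ← pow_mul, mul_comm e n,
    ZMod.card_filter_prod_ne_zero] at hsplit
  simp_rw [hchoose]
  rw [Nat.card_eq_fintype_card, Fintype.card_subtype, ← hsplit, Nat.add_sub_cancel]

/-- For `R = ℤ/p^e ℤ` with `p` prime, `e ≥ 1` and `n ≥ 1`, the number of `n`-tuples over `R`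
with product `0` equals `p^(ne) - (p-1)^n · Σ_{i=0}^{e-1} C(n+i-1, n-1) · p^((e-1)n - i)`. -/
theorem card_tuples_prod_zero_zmod (p e n : ℕ) (hp : p.Prime) (he : 1 ≤ e) (hn : 1 ≤ n) :
    Nat.card {v : Fin n → ZMod (p ^ e) // ∏ i, v i = 0} =
      p ^ (n * e) - (p - 1) ^ n *
        ∑ i ∈ Finset.range e, Nat.choose (n + i - 1) (n - 1) * p ^ ((e - 1) * n - i) :=
  card_tuples_prod_zero_zmod_general p e n hp hn
end

section
/- Let R = Z/p^e Z with p prime and e ≥ 2, let 1 ≤ s < e, and let n ≥ 1. The number of n-tuples (a_1,...,a_n) ∈ R^n with a_1⋯a_n = p^s (as an element of Z/p^e Z) equals p^((e-1)(n-1)) · (p-1)^(n-1) · C(n+s-1, n-1). -/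
/-!
Write `N_n(c)` for the number of `n`-tuples with product `c`. Splitting off the first coordinate,
`N_{n+1}(c) = ∑_z #{y | y z = c} · N_n(z)`, and for `n ≥ 1` both factors only depend on the
associate classes of `z` and `c`. In `ℤ/p^e` every nonzero element is associated to exactly one
`p^k` with `k < e`, there are `p^(e-k-1) (p-1)` of them, and `y p^k = p^m` has `p^k` solutions
when `k ≤ m` and none otherwise. Hence `N_{n+1}(p^m) = p^(e-1) (p-1) ∑_{k ≤ m} N_n(p^k)`, and
the hockey-stick identity turns this recursion into the binomial coefficient.
-/

open Finset

section TupleProducts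

variable {M : Type*} [CommMonoid M]

def tuplesProdSuccEquiv (n : ℕ) (c : M) :
    {v : Fin (n + 1) → M // ∏ i, v i = c} ≃
      Σ z : M, {y : M // y * z = c} × {w : Fin n → M // ∏ i, w i = z} where
  toFun v :=
    ⟨∏ i, Fin.tail v.1 i, ⟨v.1 0, (Fin.prod_univ_succ _).symm.trans v.2⟩, ⟨_, rfl⟩⟩
  invFun x := ⟨Fin.cons x.2.1.1 x.2.2.1, by rw [Fin.prod_univ_succ]; simp [x.2.2.2, x.2.1.2]⟩
  left_inv v := by ext1; simp
  right_inv := by rintro ⟨z, ⟨y, hy⟩, ⟨w, rfl⟩⟩; rfl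

theorem card_tuples_prod_succ [Fintype M] (n : ℕ) (c : M) :
    Nat.card {v : Fin (n + 1) → M // ∏ i, v i = c} =
      ∑ z, Nat.card {y : M // y * z = c} * Nat.card {w : Fin n → M // ∏ i, w i = z} := by
  simp only [Nat.card_congr (tuplesProdSuccEquiv n c), Nat.card_sigma, Nat.card_prod]

theorem card_tuples_prod_fin_one (c : M) : Nat.card {v : Fin 1 → M // ∏ i, v i = c} = 1 := by
  rw [Nat.card_congr ((Equiv.funUnique (Fin 1) M).subtypeEquiv (q := (· = c)) fun v => by simp)]
  exact Nat.card_unique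

theorem Associated.card_mul_eq_left {a b : M} (h : Associated a b) (c : M) :
    Nat.card {y : M // y * a = c} = Nat.card {y : M // y * b = c} := by
  obtain ⟨u, rfl⟩ := h
  exact Nat.card_congr <| (Units.mulRight u⁻¹).subtypeEquiv fun y => by
    simp [mul_comm a, mul_assoc]

theorem Associated.card_mul_eq_right {c d : M} (h : Associated c d) (a : M) :
    Nat.card {y : M // y * a = c} = Nat.card {y : M // y * a = d} := by
  obtain ⟨u, rfl⟩ := h
  exact Nat.card_congr <| (Units.mulRight u).subtypeEquiv fun y => by
    simp [mul_right_comm y]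

theorem Associated.card_tuples_prod_eq [Fintype M] {c d : M} (h : Associated c d) (n : ℕ) :
    Nat.card {v : Fin (n + 1) → M // ∏ i, v i = c} =
      Nat.card {v : Fin (n + 1) → M // ∏ i, v i = d} := by
  simp only [card_tuples_prod_succ, h.card_mul_eq_right]

end TupleProducts

namespace ZMod

variable {p e : ℕ}

theorem natCast_pow_self_eq_zero : (p : ZMod (p ^ e)) ^ e = 0 := by
  rw [← Nat.cast_pow, natCast_self]

variable [hp : Fact p.Prime]

theorem natCast_pow_ne_zero_of_lt {k : ℕ} (hk : k < e) : (p : ZMod (p ^ e)) ^ k ≠ 0 := by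
  rw [← Nat.cast_pow, Ne, natCast_eq_zero_iff, Nat.pow_dvd_pow_iff_le_right hp.out.one_lt]
  omega

theorem pow_dvd_iff_le_of_associated {j k : ℕ} {z : ZMod (p ^ e)} (hk : k < e)
    (h : Associated ((p : ZMod (p ^ e)) ^ k) z) : (p : ZMod (p ^ e)) ^ j ∣ z ↔ j ≤ k := by
  obtain ⟨u, rfl⟩ := h
  refine ⟨fun hj => ?_, fun hj => (pow_dvd_pow _ hj).trans (dvd_mul_right _ _)⟩
  by_contra! hkj
  obtain ⟨t, ht⟩ := (pow_dvd_pow (p : ZMod (p ^ e)) hkj).trans hj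
  -- `p` is nilpotent, so `u - p t` is still a unit and `p ^ k (u - p t) = 0` forces `p ^ k = 0`
  have hunit : IsUnit ((u : ZMod (p ^ e)) + -(p * t)) :=
    ((Commute.all _ t).isNilpotent_mul_right ⟨e, natCast_pow_self_eq_zero⟩).neg
      |>.isUnit_add_left_of_commute u.isUnit (Commute.all _ _)
  refine natCast_pow_ne_zero_of_lt hk (hunit.mul_left_eq_zero.1 ?_)
  rw [mul_add, ht, pow_succ]
  ring

theorem exists_associated_pow_of_ne_zero {z : ZMod (p ^ e)} (hz : z ≠ 0) :
    ∃ k < e, Associated ((p : ZMod (p ^ e)) ^ k) z := by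
  obtain ⟨k, m, hpm, hval⟩ :=
    Nat.exists_eq_pow_mul_and_not_dvd ((val_ne_zero z).2 hz) p hp.out.one_lt.ne'
  have hm : IsUnit (m : ZMod (p ^ e)) :=
    (isUnit_iff_coprime m _).2 ((hp.out.coprime_iff_not_dvd.2 hpm).symm.pow_right e)
  have hz' : z = (p : ZMod (p ^ e)) ^ k * m := by
    rw [← natCast_zmod_val z, hval]
    push_cast
    rfl
  refine ⟨k, ?_, hm.unit, hz'.symm⟩
  by_contra! hek
  exact hz (by rw [hz', pow_eq_zero_of_le hek natCast_pow_self_eq_zero, zero_mul])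

theorem associated_pow_iff {k : ℕ} (hk : k < e) (z : ZMod (p ^ e)) :
    Associated ((p : ZMod (p ^ e)) ^ k) z ↔
      (p : ZMod (p ^ e)) ^ k ∣ z ∧ ¬ (p : ZMod (p ^ e)) ^ (k + 1) ∣ z := by
  refine ⟨fun h => ⟨h.dvd, by simp [pow_dvd_iff_le_of_associated hk h]⟩,
    fun ⟨hdvd, hndvd⟩ => ?_⟩
  obtain ⟨j, hj, hjz⟩ := exists_associated_pow_of_ne_zero (p := p) (e := e) (z := z)
    (by rintro rfl; exact hndvd (dvd_zero _))
  rw [pow_dvd_iff_le_of_associated hj hjz] at hdvd hndvd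
  rwa [show k = j by omega]

theorem card_pow_dvd {k : ℕ} (hk : k ≤ e) :
    Nat.card {z : ZMod (p ^ e) // (p : ZMod (p ^ e)) ^ k ∣ z} = p ^ (e - k) := by
  have h := IsAddCyclic.card_nsmulAddMonoidHom_range (ZMod (p ^ e)) (p ^ k)
  rw [Nat.card_zmod, Nat.gcd_eq_right (pow_dvd_pow p hk), Nat.pow_div hk hp.out.pos] at h
  rw [← h]
  refine Nat.card_congr (Equiv.subtypeEquivRight fun z => ?_)
  simp [Dvd.dvd, eq_comm]

theorem card_mul_pow_eq_zero {k : ℕ} (hk : k ≤ e) :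
    Nat.card {t : ZMod (p ^ e) // t * (p : ZMod (p ^ e)) ^ k = 0} = p ^ k := by
  have h := IsAddCyclic.card_nsmulAddMonoidHom_ker (ZMod (p ^ e)) (p ^ k)
  rw [Nat.card_zmod, Nat.gcd_eq_right (pow_dvd_pow p hk)] at h
  rw [← h]
  refine Nat.card_congr (Equiv.subtypeEquivRight fun t => ?_)
  simp [mul_comm]

theorem card_mul_pow_eq_pow {k m : ℕ} (hm : m < e) :
    Nat.card {y : ZMod (p ^ e) // y * (p : ZMod (p ^ e)) ^ k = (p : ZMod (p ^ e)) ^ m} =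
      if k ≤ m then p ^ k else 0 := by
  split_ifs with hkm
  · rw [← card_mul_pow_eq_zero (hkm.trans hm.le)]
    refine Nat.card_congr <|
      (Equiv.subRight ((p : ZMod (p ^ e)) ^ (m - k))).subtypeEquiv fun y => ?_
    simp [sub_mul, sub_eq_zero, ← pow_add, Nat.sub_add_cancel hkm]
  · refine Nat.card_eq_zero.2 (Or.inl ⟨fun ⟨y, hy⟩ => hkm ?_⟩)
    exact (pow_dvd_iff_le_of_associated hm (Associated.refl _)).1 ⟨y, by rw [← hy, mul_comm]⟩

theorem card_associated_pow {k : ℕ} (hk : k < e) :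
    Nat.card {z : ZMod (p ^ e) // Associated ((p : ZMod (p ^ e)) ^ k) z} =
      p ^ (e - k - 1) * (p - 1) := by
  classical
  have hdiff : univ.filter (Associated ((p : ZMod (p ^ e)) ^ k)) =
      univ.filter ((p : ZMod (p ^ e)) ^ k ∣ ·) \
        univ.filter ((p : ZMod (p ^ e)) ^ (k + 1) ∣ ·) := by
    ext z
    simp [associated_pow_iff hk]
  have hsub : univ.filter ((p : ZMod (p ^ e)) ^ (k + 1) ∣ ·) ⊆
      univ.filter ((p : ZMod (p ^ e)) ^ k ∣ ·) := by
    intro z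
    simp only [mem_filter, mem_univ, true_and]
    exact (pow_dvd_pow _ k.le_succ).trans
  have hcard {j : ℕ} (hj : j ≤ e) :
      (univ.filter ((p : ZMod (p ^ e)) ^ j ∣ ·)).card = p ^ (e - j) := by
    rw [← Fintype.card_subtype, ← Nat.card_eq_fintype_card, card_pow_dvd hj]
  rw [Nat.card_eq_fintype_card, Fintype.card_subtype, hdiff, card_sdiff_of_subset hsub,
    hcard hk.le, hcard hk]
  obtain ⟨d, hd⟩ : ∃ d, e - k = d + 1 := ⟨e - k - 1, by omega⟩
  rw [hd, show e - (k + 1) = d by omega, Nat.add_sub_cancel, pow_succ, Nat.mul_sub_one]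

theorem sum_eq_sum_card_associated_pow_smul {A : Type*} [AddCommMonoid A]
    (F : ZMod (p ^ e) → A) (h0 : F 0 = 0) (hF : ∀ a b, Associated a b → F a = F b) :
    ∑ z, F z = ∑ k ∈ range e,
      Nat.card {z : ZMod (p ^ e) // Associated ((p : ZMod (p ^ e)) ^ k) z} •
        F ((p : ZMod (p ^ e)) ^ k) := by
  classical
  have hcover : univ.erase 0 =
      (range e).biUnion fun k => univ.filter (Associated ((p : ZMod (p ^ e)) ^ k)) := by
    ext z
    simp only [mem_erase, mem_univ, and_true, mem_biUnion, mem_range, mem_filter, true_and]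
    refine ⟨exists_associated_pow_of_ne_zero, fun ⟨k, hk, hkz⟩ => ?_⟩
    exact (hkz.ne_zero_iff).1 (natCast_pow_ne_zero_of_lt hk)
  have hdisj : (range e : Set ℕ).PairwiseDisjoint
      fun k => univ.filter (Associated ((p : ZMod (p ^ e)) ^ k)) := by
    intro j hj k hk hjk
    refine disjoint_filter.2 fun z _ hjz hkz => hjk ?_
    have := (pow_dvd_iff_le_of_associated (mem_range.1 hk) hkz).1 hjz.dvd
    have := (pow_dvd_iff_le_of_associated (mem_range.1 hj) hjz).1 hkz.dvd
    omega
  rw [← add_sum_erase _ _ (mem_univ 0), h0, zero_add, hcover, sum_biUnion hdisj]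
  refine sum_congr rfl fun k hk => ?_
  rw [sum_congr rfl fun z hz => (hF _ _ (mem_filter.1 hz).2).symm, sum_const,
    Nat.card_eq_fintype_card, Fintype.card_subtype]

theorem card_tuples_prod_pow_succ (n : ℕ) {m : ℕ} (hm : m < e) :
    Nat.card {v : Fin (n + 2) → ZMod (p ^ e) // ∏ i, v i = (p : ZMod (p ^ e)) ^ m} =
      p ^ (e - 1) * (p - 1) * ∑ k ∈ range (m + 1),
        Nat.card {v : Fin (n + 1) → ZMod (p ^ e) // ∏ i, v i = (p : ZMod (p ^ e)) ^ k} := by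
  rw [card_tuples_prod_succ, sum_eq_sum_card_associated_pow_smul _ ?zero ?invariant]
  case zero =>
    have hempty : IsEmpty {y : ZMod (p ^ e) // y * 0 = (p : ZMod (p ^ e)) ^ m} :=
      ⟨fun ⟨y, hy⟩ => natCast_pow_ne_zero_of_lt hm (by rw [← hy, mul_zero])⟩
    rw [Nat.card_of_isEmpty, zero_mul]
  case invariant =>
    intro a b hab
    rw [hab.card_mul_eq_left, hab.card_tuples_prod_eq]
  have hterm : ∀ k ∈ range e,
      Nat.card {z : ZMod (p ^ e) // Associated ((p : ZMod (p ^ e)) ^ k) z} •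
      (Nat.card {y : ZMod (p ^ e) // y * (p : ZMod (p ^ e)) ^ k = (p : ZMod (p ^ e)) ^ m} *
        Nat.card {v : Fin (n + 1) → ZMod (p ^ e) // ∏ i, v i = (p : ZMod (p ^ e)) ^ k}) =
      if k ∈ range (m + 1) then
        p ^ (e - 1) * (p - 1) *
          Nat.card {v : Fin (n + 1) → ZMod (p ^ e) // ∏ i, v i = (p : ZMod (p ^ e)) ^ k}
      else 0 := by
    intro k hk
    have hke : k < e := mem_range.1 hk
    rw [card_associated_pow hke, card_mul_pow_eq_pow hm, smul_eq_mul]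
    by_cases hkm : k ≤ m
    · rw [if_pos hkm, if_pos (mem_range.2 (by omega)), show e - 1 = e - k - 1 + k by omega,
        pow_add]
      ring
    · rw [if_neg hkm, if_neg (by rw [mem_range]; omega), zero_mul, mul_zero]
  rw [sum_congr rfl hterm, sum_ite_mem, inter_eq_right.2 (range_subset_range.2 hm), mul_sum]

theorem card_tuples_prod_pow (n : ℕ) {m : ℕ} (hm : m < e) :
    Nat.card {v : Fin (n + 1) → ZMod (p ^ e) // ∏ i, v i = (p : ZMod (p ^ e)) ^ m} =
      (p ^ (e - 1) * (p - 1)) ^ n * (m + n).choose n := by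
  induction n generalizing m with
  | zero => simpa using card_tuples_prod_fin_one ((p : ZMod (p ^ e)) ^ m)
  | succ n ih =>
    rw [card_tuples_prod_pow_succ n hm, sum_congr rfl fun k hk => ih ((mem_range.1 hk).trans_le hm),
      ← mul_sum, Nat.sum_range_add_choose, pow_succ, ← add_assoc]
    ring

end ZMod

theorem card_tuples_prod_ps_zmod_general (p e s n : ℕ) (hp : p.Prime)
    (hs2 : s < e) (hn : 1 ≤ n) :
    Nat.card {v : Fin n → ZMod (p ^ e) // ∏ i, v i = (p : ZMod (p ^ e)) ^ s} =
      p ^ ((e - 1) * (n - 1)) * (p - 1) ^ (n - 1) * Nat.choose (n + s - 1) (n - 1) := by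
  have := Fact.mk hp
  obtain ⟨n, rfl⟩ := Nat.exists_eq_add_of_le' hn
  rw [ZMod.card_tuples_prod_pow n hs2, show n + 1 + s - 1 = s + n by omega, Nat.add_sub_cancel,
    mul_pow, pow_mul]

/-- For `R = ℤ/p^e ℤ` with `p` prime, `e ≥ 2`, `1 ≤ s < e` and `n ≥ 1`, the number of
`n`-tuples over `R` with product `p^s` equals `p^((e-1)(n-1)) · (p-1)^(n-1) · C(n+s-1, n-1)`. -/
theorem card_tuples_prod_ps_zmod (p e s n : ℕ) (hp : p.Prime) (he : 2 ≤ e)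
    (hs1 : 1 ≤ s) (hs2 : s < e) (hn : 1 ≤ n) :
    Nat.card {v : Fin n → ZMod (p ^ e) // ∏ i, v i = (p : ZMod (p ^ e)) ^ s} =
      p ^ ((e - 1) * (n - 1)) * (p - 1) ^ (n - 1) * Nat.choose (n + s - 1) (n - 1) :=
  card_tuples_prod_ps_zmod_general p e s n hp hs2 hn
end

section
/- Let F_q be a finite field and n a positive integer with gcd(n,q)=1. The number of nonsingular n×n circulant matrices over F_q equals ∏_{d|n} (q^{ord_d(q)} - 1)^{φ(d)/ord_d(q)}, where ord_d(q) is the multiplicative order of q modulo d and φ is Euler's totient. -/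
/-!
A circulant matrix `circulant v` is the matrix of multiplication by `∑ᵢ vᵢ Xⁱ` on
`F[X]/(Xⁿ - 1)` in the basis of powers of `X`, so its determinant is the norm of that element,
and it is nonsingular iff the element is a unit. Since `gcd(n, q) = 1`, the polynomial
`Xⁿ - 1 = ∏_{d ∣ n} Φ_d` is squarefree, so by the Chinese remainder theorem `F[X]/(Xⁿ - 1)` is
the product of the fields `F[X]/(g)`, `g` running over the monic irreducible factors of the
`Φ_d`; the unit group of `F[X]/(g)` has `q ^ deg g - 1` elements. Each `Φ_d` has
`φ(d) / ord_d(q)` such factors, all of degree `ord_d(q)`.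
-/

open Polynomial UniqueFactorizationMonoid

theorem Algebra.isUnit_norm_iff {R S : Type*} [CommRing R] [CommRing S] [Algebra R S]
    [Module.Free R S] [Module.Finite R S] {x : S} : IsUnit (Algebra.norm R x) ↔ IsUnit x := by
  rw [Algebra.norm_apply, ← LinearMap.isUnit_iff_isUnit_det, Algebra.lmul_isUnit_iff]

theorem ZMod.orderOf_unitOfCoprime {d : ℕ} (a : ℕ) (h : a.Coprime d) :
    orderOf (ZMod.unitOfCoprime a h) = orderOf (a : ZMod d) := by
  rw [← orderOf_units, ZMod.coe_unitOfCoprime]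

theorem FiniteField.isUnit_natCast_of_coprime_card {K : Type*} [Field K] [Fintype K] {d : ℕ}
    (hd : (Fintype.card K).Coprime d) : IsUnit (d : K) := by
  simpa [FiniteField.cast_card_eq_zero] using
    (Nat.isCoprime_iff_coprime.mpr hd).map (Int.castRingHom K)

theorem UniqueFactorizationMonoid.normalizedFactors_finset_prod {α ι : Type*}
    [CommMonoidWithZero α] [NormalizationMonoid α] [UniqueFactorizationMonoid α]
    (s : Finset ι) (f : ι → α) (hf : ∀ i ∈ s, f i ≠ 0) :
    normalizedFactors (∏ i ∈ s, f i) = ∑ i ∈ s, normalizedFactors (f i) := by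
  rw [Finset.prod_eq_multiset_prod, normalizedFactors_multiset_prod _ (by simpa using hf),
    Multiset.map_map, Finset.sum_eq_multiset_sum]
  rfl

theorem Polynomial.natDegree_X_pow_sub_one (R : Type*) [CommRing R] [Nontrivial R] (n : ℕ) :
    (X ^ n - 1 : R[X]).natDegree = n := by
  simpa using natDegree_X_pow_sub_C (n := n) (r := (1 : R))

theorem Polynomial.monic_X_pow_sub_one (R : Type*) [CommRing R] {n : ℕ} (hn : n ≠ 0) :
    (X ^ n - 1 : R[X]).Monic := by
  simpa using monic_X_pow_sub_C (1 : R) hn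

namespace AdjoinRoot

section Circulant

variable (R : Type*) [CommRing R] (n : ℕ)

theorem root_X_pow_sub_one_pow : root (X ^ n - 1 : R[X]) ^ n = 1 := by
  have := mk_self (f := (X ^ n - 1 : R[X]))
  rwa [map_sub, map_pow, mk_X, map_one, sub_eq_zero] at this

variable [Nontrivial R] [NeZero n]

noncomputable def powRootBasis : Module.Basis (ZMod n) R (AdjoinRoot (X ^ n - 1 : R[X])) :=
  (powerBasis' (monic_X_pow_sub_one R (NeZero.ne n))).basis.reindex
    ((finCongr (show (powerBasis' (monic_X_pow_sub_one R (NeZero.ne n))).dim = n from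
      natDegree_X_pow_sub_one R n)).trans (ZMod.finEquiv n).toEquiv)

theorem powRootBasis_apply (a : ZMod n) :
    powRootBasis R n a = root (X ^ n - 1 : R[X]) ^ a.val := by
  -- `ZMod.finEquiv n` only reduces to the identity once `n` is a successor.
  obtain ⟨k, rfl⟩ : ∃ k, n = k + 1 := Nat.exists_eq_succ_of_ne_zero (NeZero.ne n)
  rw [powRootBasis, Module.Basis.reindex_apply, PowerBasis.basis_eq_pow, powerBasis'_gen]
  rfl

theorem powRootBasis_mul (a b : ZMod n) :
    powRootBasis R n a * powRootBasis R n b = powRootBasis R n (a + b) := by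
  simp only [powRootBasis_apply, ZMod.val_add, ← pow_eq_pow_mod _ (root_X_pow_sub_one_pow R n),
    pow_add]

theorem leftMulMatrix_powRootBasis (v : ZMod n → R) :
    Algebra.leftMulMatrix (powRootBasis R n) ((powRootBasis R n).equivFun.symm v) =
      Matrix.circulant v := by
  set b := powRootBasis R n
  ext i j
  have hmul : b.equivFun.symm v * b j = b.equivFun.symm fun i => v (i - j) := by
    simp only [Module.Basis.equivFun_symm_apply, Finset.sum_mul, smul_mul_assoc, b,
      powRootBasis_mul]
    exact Fintype.sum_equiv (Equiv.addRight j) _ _ fun k => by simp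
  rw [Algebra.leftMulMatrix_eq_repr_mul, hmul, ← b.equivFun_apply, LinearEquiv.apply_symm_apply,
    Matrix.circulant_apply]

theorem det_circulant_eq_norm (v : ZMod n → R) :
    (Matrix.circulant v).det = Algebra.norm R ((powRootBasis R n).equivFun.symm v) := by
  rw [Algebra.norm_eq_matrix_det (powRootBasis R n), leftMulMatrix_powRootBasis]

theorem card_isUnit_det_circulant :
    Nat.card {v : ZMod n → R // IsUnit (Matrix.circulant v).det} =
      Nat.card (AdjoinRoot (X ^ n - 1 : R[X]))ˣ := by
  have := Module.Free.of_basis (powRootBasis R n)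
  have := Module.Finite.of_basis (powRootBasis R n)
  calc Nat.card {v : ZMod n → R // IsUnit (Matrix.circulant v).det}
      = Nat.card {x : AdjoinRoot (X ^ n - 1 : R[X]) // IsUnit x} :=
        Nat.card_congr <| (powRootBasis R n).equivFun.symm.toEquiv.subtypeEquiv fun v => by
          rw [det_circulant_eq_norm, Algebra.isUnit_norm_iff]
          rfl
    _ = _ := (Nat.card_congr Submonoid.unitsTypeEquivIsUnitSubmonoid.toEquiv).symm

end Circulant

section FiniteField

variable {K : Type*} [Field K] [Fintype K]

theorem card_units_of_irreducible {g : K[X]} (hg : Irreducible g) :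
    Nat.card (AdjoinRoot g)ˣ = Fintype.card K ^ g.natDegree - 1 := by
  have := Fact.mk hg
  have := (powerBasis hg.ne_zero).finite
  rw [Nat.card_units, Module.natCard_eq_pow_finrank (K := K), (powerBasis hg.ne_zero).finrank,
    powerBasis_dim, Nat.card_eq_fintype_card]

theorem card_units_of_squarefree [DecidableEq K] {f : K[X]} (hf : Squarefree f) :
    Nat.card (AdjoinRoot f)ˣ =
      ((normalizedFactors f).map fun g => Fintype.card K ^ g.natDegree - 1).prod := by
  have hnodup := (squarefree_iff_nodup_normalizedFactors hf.ne_zero).mp hf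
  set S := (normalizedFactors f).toFinset
  have hS : ∀ g ∈ S, g ∈ normalizedFactors f := fun g hg => Multiset.mem_toFinset.mp hg
  have hprime : ∀ g ∈ S, Prime (Ideal.span {g}) := fun g hg =>
    Ideal.prime_span_singleton_iff.mpr (prime_of_normalized_factor g (hS g hg))
  have hdistinct : ∀ g ∈ S, ∀ h ∈ S, g ≠ h → Ideal.span {g} ≠ Ideal.span {h} :=
    fun g hg h hh hne hgh => hne <|
      (Ideal.span_singleton_eq_span_singleton.mp hgh).eq_of_normalized
        (normalize_normalized_factor g (hS g hg)) (normalize_normalized_factor h (hS h hh))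
  have hprod : ∏ g ∈ S, Ideal.span {g} ^ 1 = Ideal.span {f} := by
    simp only [pow_one, Ideal.prod_span_singleton, Ideal.span_singleton_eq_span_singleton]
    rw [Finset.prod_eq_multiset_prod, Multiset.toFinset_val, hnodup.dedup, Multiset.map_id']
    exact prod_normalizedFactors hf.ne_zero
  let e : AdjoinRoot f ≃+* ∀ g : S, K[X] ⧸ Ideal.span {(g : K[X])} ^ 1 :=
    IsDedekindDomain.quotientEquivPiOfFinsetProdEq _ (fun g => Ideal.span {g}) (fun _ => 1)
      hprime hdistinct hprod
  calc Nat.card (AdjoinRoot f)ˣ = Nat.card (∀ g : S, K[X] ⧸ Ideal.span {(g : K[X])} ^ 1)ˣ :=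
        Nat.card_congr (Units.mapEquiv e.toMulEquiv).toEquiv
    _ = ∏ g : S, Nat.card (K[X] ⧸ Ideal.span {(g : K[X])} ^ 1)ˣ := by
        rw [Nat.card_congr MulEquiv.piUnits.toEquiv, Nat.card_pi]
    _ = ∏ g ∈ S, (Fintype.card K ^ g.natDegree - 1) := by
        rw [← Finset.prod_coe_sort S]
        refine Finset.prod_congr rfl fun g _ => ?_
        rw [pow_one]
        exact card_units_of_irreducible (irreducible_of_normalized_factor _ (hS g g.2))
    _ = _ := by rw [Finset.prod_eq_multiset_prod, Multiset.toFinset_val, hnodup.dedup]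

end FiniteField

end AdjoinRoot

namespace Polynomial

variable {K : Type*} [Field K] [Fintype K] [DecidableEq K] {d : ℕ}

theorem natDegree_eq_orderOf_card_of_mem_normalizedFactors_cyclotomic
    (hd : (Fintype.card K).Coprime d) {P : K[X]} (hP : P ∈ normalizedFactors (cyclotomic d K)) :
    P.natDegree = orderOf (Fintype.card K : ZMod d) := by
  obtain ⟨p, -, f, hp, hcard⟩ := FiniteField.card' K
  have := Fact.mk hp
  rw [hcard] at hd ⊢
  have hpd : p.Coprime d := Nat.Coprime.coprime_dvd_left (dvd_pow_self p f.ne_zero) hd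
  rw [natDegree_of_mem_normalizedFactors_cyclotomic hcard hpd hP, ZMod.orderOf_unitOfCoprime]

theorem card_normalizedFactors_cyclotomic (hd : (Fintype.card K).Coprime d) :
    Multiset.card (normalizedFactors (cyclotomic d K)) =
      d.totient / orderOf (Fintype.card K : ZMod d) := by
  obtain ⟨p, -, f, hp, hcard⟩ := FiniteField.card' K
  have := Fact.mk hp
  have : NeZero (d : K) := ⟨(FiniteField.isUnit_natCast_of_coprime_card hd).ne_zero⟩
  have hnodup := (squarefree_iff_nodup_normalizedFactors (cyclotomic_ne_zero d K)).mp
    (squarefree_cyclotomic d K)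
  rw [hcard] at hd ⊢
  have hpd : p.Coprime d := Nat.Coprime.coprime_dvd_left (dvd_pow_self p f.ne_zero) hd
  rw [← Multiset.toFinset_card_of_nodup hnodup, normalizedFactors_cyclotomic_card hcard hpd,
    ZMod.orderOf_unitOfCoprime]

end Polynomial

/-- Over a finite field with `q` elements and `gcd(n,q) = 1`, the number of nonsingular `n × n`
circulant matrices equals `∏_{d ∣ n} (q^(ord_d q) - 1)^(φ(d)/ord_d q)`. -/
theorem card_nonsingular_circulant_field {F : Type*} [Field F] [Fintype F] (q n : ℕ)
    (hq : Fintype.card F = q) [NeZero n] (hgcd : Nat.gcd n q = 1) :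
    Nat.card {v : ZMod n → F // IsUnit (Matrix.circulant v).det} =
      ∏ d ∈ n.divisors,
        (q ^ orderOf (q : ZMod d) - 1) ^ (Nat.totient d / orderOf (q : ZMod d)) := by
  classical
  subst hq
  have hn : (n : F) ≠ 0 :=
    (FiniteField.isUnit_natCast_of_coprime_card (Nat.Coprime.symm hgcd)).ne_zero
  have hsq : Squarefree (X ^ n - 1 : F[X]) := by
    simpa using (separable_X_pow_sub_C (1 : F) hn one_ne_zero).squarefree
  rw [AdjoinRoot.card_isUnit_det_circulant, AdjoinRoot.card_units_of_squarefree hsq,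
    ← prod_cyclotomic_eq_X_pow_sub_one (NeZero.pos n),
    normalizedFactors_finset_prod _ _ fun d _ => cyclotomic_ne_zero d F,
    ← Multiset.coe_mapAddMonoidHom, map_sum, Multiset.prod_sum]
  refine Finset.prod_congr rfl fun d hdn => ?_
  have hd : (Fintype.card F).Coprime d :=
    (Nat.Coprime.coprime_dvd_left (Nat.dvd_of_mem_divisors hdn) hgcd).symm
  rw [Multiset.coe_mapAddMonoidHom, Multiset.map_congr rfl fun P hP => by
    rw [natDegree_eq_orderOf_card_of_mem_normalizedFactors_cyclotomic hd hP],
    Multiset.map_const', Multiset.prod_replicate, card_normalizedFactors_cyclotomic hd]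
end

section
/- Let R be a commutative ring containing a primitive n-th root of unity ω such that n is invertible in R. Then every n×n circulant matrix cir(a_1,...,a_n) over R has determinant ∏_{j=0}^{n-1} (Σ_{i=1}^{n} a_i ω^{(i-1)j}). -/
/-!
Every additive character `ψ` of `ZMod n` is a left eigenvector of `circulant v`, with eigenvalue
`∑ i, v i * ψ i`. The characters `i ↦ ω ^ (i * j)` form, up to reindexing, the
Vandermonde matrix `F` of the powers of `ω`, whose determinant
`∏ (ω ^ j - ω ^ i) = ∏ ω ^ i (ω ^ (j - i) - 1)` is a unit by primitivity of `ω`;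
cancelling it from `det (F * circulant v) = det (diagonal d * F)` gives the product formula.
-/

open Matrix

theorem Matrix.det_eq_prod_of_mul_eq_diagonal_mul {ι R : Type*} [Fintype ι] [DecidableEq ι]
    [CommRing R] {A P : Matrix ι ι R} {d : ι → R} (hP : IsUnit P.det)
    (h : P * A = diagonal d * P) : A.det = ∏ i, d i :=
  hP.mul_left_cancel <| by rw [← det_mul, h, det_mul, det_diagonal, mul_comm]

theorem AddChar.sum_mul_circulant {α R : Type*} [AddCommGroup α] [Fintype α] [CommSemiring R]
    (ψ : AddChar α R) (v : α → R) (j : α) :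
    ∑ k, ψ k * circulant v k j = (∑ i, v i * ψ i) * ψ j := by
  rw [← Fintype.sum_equiv (Equiv.addRight j) _ _ fun _ => rfl, Finset.sum_mul]
  refine Finset.sum_congr rfl fun i _ => ?_
  simp only [Equiv.coe_addRight, circulant_apply, add_sub_cancel_right, map_add_eq_mul]
  ring

theorem AddChar.of_mul_circulant {ι α R : Type*} [Fintype ι] [DecidableEq ι] [AddCommGroup α]
    [Fintype α] [CommSemiring R] (ψ : ι → AddChar α R) (v : α → R) :
    (of fun j i => ψ j i : Matrix ι α R) * circulant v =
      diagonal (fun j => ∑ i, v i * ψ j i) * of fun j i => ψ j i := by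
  ext j l
  simp only [diagonal_mul, of_apply]
  exact (ψ j).sum_mul_circulant v l

theorem isUnit_det_vandermonde_pow {R : Type*} [CommRing R] {n : ℕ} {ω : R} (hω : IsUnit ω)
    (hωk : ∀ k : ℕ, 0 < k → k < n → IsUnit (ω ^ k - 1)) :
    IsUnit (vandermonde fun k : Fin n => ω ^ (k : ℕ)).det := by
  rw [det_vandermonde, IsUnit.prod_univ_iff]
  refine fun i => IsUnit.prod_iff.mpr fun j hij => ?_
  have hij : (i : ℕ) < j := Fin.lt_def.mp (Finset.mem_Ioi.mp hij)
  rw [← Nat.add_sub_of_le hij.le, pow_add, ← mul_sub_one]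
  exact (hω.pow _).mul (hωk _ (Nat.sub_pos_of_lt hij) ((Nat.sub_le _ _).trans_lt j.isLt))

theorem AddChar.zmodChar_mulShift_apply {R : Type*} [CommMonoid R] {n : ℕ} [NeZero n] {ω : R}
    (hω : ω ^ n = 1) (j i : ZMod n) : (zmodChar n hω).mulShift j i = ω ^ (i.val * j.val) := by
  rw [mulShift_apply, zmodChar_apply, ZMod.val_mul, ← pow_eq_pow_mod _ hω, mul_comm]

lemma ZMod.val_finEquiv_symm (n : ℕ) [NeZero n] (a : ZMod n) :
    (((ZMod.finEquiv n).symm a : Fin n) : ℕ) = a.val := by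
  obtain ⟨m, rfl⟩ := Nat.exists_eq_succ_of_ne_zero (NeZero.ne n)
  rfl

theorem isUnit_det_pow_val_mul_val {R : Type*} [CommRing R] {n : ℕ} [NeZero n] {ω : R}
    (hωn : ω ^ n = 1) (hωk : ∀ k : ℕ, 0 < k → k < n → IsUnit (ω ^ k - 1)) :
    IsUnit (of fun j i : ZMod n => ω ^ (i.val * j.val)).det := by
  have hV : (of fun j i : ZMod n => ω ^ (i.val * j.val)) =
      (vandermonde fun k : Fin n => ω ^ (k : ℕ)).submatrix (ZMod.finEquiv n).toEquiv.symm
        (ZMod.finEquiv n).toEquiv.symm := by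
    ext j i
    simp [vandermonde_apply, ZMod.val_finEquiv_symm, ← pow_mul, mul_comm]
  rw [hV, det_submatrix_equiv_self]
  exact isUnit_det_vandermonde_pow (IsUnit.of_pow_eq_one hωn (NeZero.ne n)) hωk

theorem det_circulant_eq_prod_eigenvalues_general {R : Type*} [CommRing R] (n : ℕ) [NeZero n]
    (ω : R) (hωn : ω ^ n = 1) (hωk : ∀ k : ℕ, 0 < k → k < n → IsUnit (ω ^ k - 1))
    (v : ZMod n → R) :
    (Matrix.circulant v).det =
      ∏ j : ZMod n, ∑ i : ZMod n, v i * ω ^ (i.val * j.val) := by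
  have h := AddChar.of_mul_circulant (fun j => (AddChar.zmodChar n hωn).mulShift j) v
  simp only [AddChar.zmodChar_mulShift_apply] at h
  exact det_eq_prod_of_mul_eq_diagonal_mul (isUnit_det_pow_val_mul_val hωn hωk) h

/-- If a commutative ring `R` contains a primitive `n`-th root of unity `ω` (with `ω^k - 1` a
unit for `0 < k < n`) and `n` is invertible in `R`, then every `n × n` circulant matrix has
determinant `∏_j Σ_i v i · ω^(i·j)`. -/
theorem det_circulant_eq_prod_eigenvalues {R : Type*} [CommRing R] (n : ℕ) [NeZero n]
    (ω : R) (hωn : ω ^ n = 1) (hωk : ∀ k : ℕ, 0 < k → k < n → IsUnit (ω ^ k - 1))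
    (hn : IsUnit (n : R)) (v : ZMod n → R) :
    (Matrix.circulant v).det =
      ∏ j : ZMod n, ∑ i : ZMod n, v i * ω ^ (i.val * j.val) :=
  det_circulant_eq_prod_eigenvalues_general n ω hωn hωk v
end

section
/- Let F_q be a finite field and let n be a positive divisor of q-1. Then for every a ∈ F_q, the number of n×n circulant matrices over F_q with determinant a equals the number of n×n diagonal matrices over F_q with determinant a. In particular, the number of n×n circulant matrices with determinant 0 is q^n - (q-1)^n. -/
/-! A primitive `n`-th root of unity in `F` gives an injective additive character `ψ` of `ZMod n`.
The Vandermonde matrix `(ψ (i * j))` is then invertible and diagonalizes every circulant matrix,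
the eigenvalues being the discrete Fourier transform of its first column. As the Fourier transform
is a bijection of `ZMod n → F`, circulant matrices of determinant `a` correspond to tuples with
product `a`. -/

open Matrix

namespace Matrix

variable {α R : Type*} [CommRing α] [Fintype α] [CommRing R]

def fourierMatrix (ψ : AddChar α R) : Matrix α α R := of fun i j => ψ (i * j)

def dft (ψ : AddChar α R) (v : α → R) (k : α) : R := ∑ t, ψ (-(k * t)) * v t

theorem dft_apply_eq_mulVec (ψ : AddChar α R) (v : α → R) (k : α) :
    dft ψ v k = (fourierMatrix ψ *ᵥ v) (-k) := by
  simp [dft, fourierMatrix, mulVec, dotProduct]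

theorem circulant_mul_fourierMatrix [DecidableEq α] (ψ : AddChar α R) (v : α → R) :
    circulant v * fourierMatrix ψ = fourierMatrix ψ * diagonal (dft ψ v) := by
  ext j k
  rw [mul_diagonal, mul_apply, dft, Finset.mul_sum, ← (Equiv.subLeft j).sum_comp]
  refine Finset.sum_congr rfl fun t _ => ?_
  simp only [circulant_apply, fourierMatrix, of_apply, Equiv.subLeft_apply, sub_sub_cancel]
  rw [show (j - t) * k = j * k + -(k * t) by ring, AddChar.map_add_eq_mul]
  ring

theorem det_circulant_eq_prod_dft [DecidableEq α] {ψ : AddChar α R}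
    (hψ : IsUnit (fourierMatrix ψ).det) (v : α → R) : (circulant v).det = ∏ k, dft ψ v k := by
  have h := congrArg det (circulant_mul_fourierMatrix ψ v)
  rw [det_mul, det_mul, det_diagonal, mul_comm] at h
  exact hψ.mul_left_cancel h

theorem dft_injective [DecidableEq α] {ψ : AddChar α R} (hψ : IsUnit (fourierMatrix ψ).det) :
    Function.Injective (dft ψ) := by
  intro v w h
  refine mulVec_injective_of_isUnit ((isUnit_iff_isUnit_det _).mpr hψ) (funext fun k => ?_)
  simpa only [dft_apply_eq_mulVec, neg_neg] using congrFun h (-k)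

theorem card_det_circulant_eq_card_prod [DecidableEq α] [Finite R] {ψ : AddChar α R}
    (hψ : IsUnit (fourierMatrix ψ).det) (a : R) :
    Nat.card {v : α → R // (circulant v).det = a} = Nat.card {w : α → R // ∏ k, w k = a} :=
  Nat.card_congr <|
    (Equiv.ofBijective _ (Finite.injective_iff_bijective.mp (dft_injective hψ))).subtypeEquiv
      fun v => by rw [det_circulant_eq_prod_dft hψ, Equiv.ofBijective_apply]

theorem det_fourierMatrix_zmod_ne_zero {n : ℕ} [NeZero n] [IsDomain R] {ψ : AddChar (ZMod n) R}
    (hψ : Function.Injective ψ) : (fourierMatrix ψ).det ≠ 0 := by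
  let e := (ZMod.finEquiv n).toEquiv
  have he (j : Fin n) : (e j).val = j := by
    obtain ⟨m, rfl⟩ := Nat.exists_eq_succ_of_ne_zero (NeZero.ne n)
    rfl
  have hV : (fourierMatrix ψ).submatrix e e = vandermonde (fun i => ψ (e i)) := by
    ext i j
    rw [submatrix_apply, fourierMatrix, of_apply, vandermonde_apply, ← he j,
      ← AddChar.map_nsmul_eq_pow, nsmul_eq_mul, ZMod.natCast_zmod_val, mul_comm]
  rw [← det_submatrix_equiv_self e, hV, det_vandermonde_ne_zero_iff]
  exact hψ.comp e.injective

end Matrix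

theorem IsPrimitiveRoot.zmodChar_injective {M : Type*} [CommMonoid M] {n : ℕ} [NeZero n] {ζ : M}
    (hζ : IsPrimitiveRoot ζ n) : Function.Injective (AddChar.zmodChar n hζ.pow_eq_one) := by
  intro a b h
  exact ZMod.val_injective n (hζ.pow_inj a.val_lt b.val_lt h)

theorem FiniteField.exists_isPrimitiveRoot_of_dvd {F : Type*} [Field F] [Finite F] {n : ℕ}
    (hn : n ∣ Nat.card F - 1) : ∃ ζ : F, IsPrimitiveRoot ζ n := by
  obtain ⟨g, hg⟩ := IsCyclic.exists_ofOrder_eq_natCard (α := Fˣ)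
  have hq : Nat.card F - 1 ≠ 0 := Nat.sub_ne_zero_of_lt Finite.one_lt_card
  have hg' : IsPrimitiveRoot (g : F) (Nat.card F - 1) := by
    rw [IsPrimitiveRoot.coe_units_iff, IsPrimitiveRoot.iff_orderOf, hg, Nat.card_units]
  refine ⟨_, Nat.div_div_self hn hq ▸ hg'.pow_of_dvd ?_ (Nat.div_dvd_of_dvd hn)⟩
  have hq' : 0 < Nat.card F - 1 := Nat.pos_of_ne_zero hq
  exact (Nat.div_pos (Nat.le_of_dvd hq' hn) (Nat.pos_of_dvd_of_pos hn hq')).ne'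

theorem Equiv.card_subtype_prod_eq {ι κ M : Type*} [Fintype ι] [Fintype κ] [CommMonoid M]
    (e : ι ≃ κ) (a : M) :
    Nat.card {v : κ → M // ∏ k, v k = a} = Nat.card {v : ι → M // ∏ i, v i = a} :=
  Nat.card_congr <| (e.symm.arrowCongr (Equiv.refl M)).subtypeEquiv fun v => by
    simp [e.prod_comp]

theorem card_subtype_prod_eq_zero {ι M : Type*} [Fintype ι] [Fintype M] [CommMonoidWithZero M]
    [NoZeroDivisors M] [Nontrivial M] :
    Nat.card {v : ι → M // ∏ i, v i = 0} =
      Fintype.card M ^ Fintype.card ι - (Fintype.card M - 1) ^ Fintype.card ι := by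
  classical
  have hne : {v : ι → M // ¬∏ i, v i = 0} ≃ (ι → {x : M // ¬x = 0}) :=
    (Equiv.subtypeEquivRight fun v => by simp [Finset.prod_eq_zero_iff]).trans
      (Equiv.subtypePiEquivPi (p := fun _ x => ¬x = 0))
  have hcard : Fintype.card {v : ι → M // ¬∏ i, v i = 0} =
      (Fintype.card M - 1) ^ Fintype.card ι := by
    rw [Fintype.card_congr hne, Fintype.card_fun, Fintype.card_subtype_compl,
      Fintype.card_subtype_eq]
  rw [Nat.card_eq_fintype_card, ← hcard, Fintype.card_subtype_compl, Fintype.card_fun,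
    Nat.sub_sub_self (Fintype.card_fun (α := ι) (β := M) ▸ Fintype.card_subtype_le _)]

/-- Over a finite field with `q` elements, if `n` is a positive divisor of `q - 1`, then for
every `a` the number of `n × n` circulant matrices of determinant `a` equals the number of
`n × n` diagonal matrices of determinant `a`; in particular the number of circulant matrices of
determinant `0` is `q^n - (q-1)^n`. -/
theorem card_circulant_eq_card_diag {F : Type*} [Field F] [Fintype F] (q n : ℕ)
    (hq : Fintype.card F = q) [NeZero n] (hdvd : n ∣ q - 1) :
    (∀ a : F,
      Nat.card {v : ZMod n → F // (Matrix.circulant v).det = a} =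
        Nat.card {v : Fin n → F // ∏ i, v i = a}) ∧
    Nat.card {v : ZMod n → F // (Matrix.circulant v).det = 0} = q ^ n - (q - 1) ^ n := by
  subst hq
  obtain ⟨ζ, hζ⟩ := FiniteField.exists_isPrimitiveRoot_of_dvd (F := F) (n := n)
    (Nat.card_eq_fintype_card (α := F) ▸ hdvd)
  have hV := (det_fourierMatrix_zmod_ne_zero hζ.zmodChar_injective).isUnit
  have hcard (a : F) : Nat.card {v : ZMod n → F // (circulant v).det = a} =
      Nat.card {v : Fin n → F // ∏ i, v i = a} :=
    (card_det_circulant_eq_card_prod hV a).trans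
      ((ZMod.finEquiv n).toEquiv.card_subtype_prod_eq a)
  refine ⟨hcard, ?_⟩
  rw [hcard, card_subtype_prod_eq_zero, Fintype.card_fin]
end
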